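/- If û ∈ o_L((Z))^× satisfies 𝒩(û) = û, then ψ_Col(Δ_LT(û)) = π_L·Δ_LT(û); equivalently, the differential form dû/û = Δ_LT(û)·g_LT dZ is invariant under the operator ψ_{Ω¹}(f·g_LT dZ) := π_L^{-1}·ψ_Col(f)·g_LT dZ. -/

import Mathlib

/-!
Write `Δ = Δ_LT(û)` and `W = Z·Δ ∈ o_L[[Z]]`, and choose `n ≥ 0` with `h = [π_L](Z)^n·û ∈ o_L[[Z]]`;
then `𝒩(h) = Z^{qn}·û`. The logarithmic derivative of `φ_L(𝒩 h) = ∏_{a ∈ LT_1} h(a +_LT Z)` can be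
computed factor by factor from `h`, using that `g_LT dZ` is invariant under translation by `a`, or
from `𝒩 h = Z^{qn}·û`, using `φ_L^*(g_LT dZ) = π_L·g_LT dZ`. Comparing the two gives
`Σ_a ([π_L]·Δ)(a +_LT Z) = φ_L(π_L·W)`, i.e. `ψ_Col([π_L](Z)·Δ) = π_L·W`, which is the claim
multiplied by `Z`.
-/

open PowerSeries

/-- Formal derivative of a Laurent series (writing `f = Z^d·P(Z)` with `d = f.order` and
`P = f.powerSeriesPart`, its derivative is `d·Z^{d-1}·P + Z^d·P'`). -/
noncomputable def lderiv {R : Type*} [CommRing R] (f : LaurentSeries R) : LaurentSeries R :=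
  HahnSeries.single (f.order - 1) ((f.order : R)) *
      HahnSeries.ofPowerSeries ℤ R f.powerSeriesPart
    + HahnSeries.single f.order 1 *
      HahnSeries.ofPowerSeries ℤ R (PowerSeries.derivativeFun f.powerSeriesPart)

/-- The logarithmic derivative `Δ_LT(f) = g_LT⁻¹·f'/f` on the Laurent series ring `o_L((Z))`,
where `g_LT ∈ o_L[[Z]]ˣ` is the unit attached to the invariant differential form
(`Ring.inverse f = 0` for non-units `f`). -/
noncomputable def DeltaLTLaurent {O : Type*} [CommRing O] (g : (PowerSeries O)ˣ)
    (f : LaurentSeries O) : LaurentSeries O :=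
  HahnSeries.ofPowerSeries ℤ O (↑g⁻¹ : PowerSeries O) * lderiv f * Ring.inverse f

/-- `D f / f = b / a`, with the denominators cleared. -/
def HasLogDeriv {R A : Type*} [CommRing R] [CommRing A] [Algebra R A] (D : Derivation R A A)
    (a b f : A) : Prop :=
  a * D f = b * f

namespace HasLogDeriv

variable {R A : Type*} [CommRing R] [CommRing A] [Algebra R A] {D : Derivation R A A}
  {a b c f f' : A}

theorem self (f : A) : HasLogDeriv D f (D f) f := mul_comm _ _

theorem one (a : A) : HasLogDeriv D a 0 1 := by
  simp [HasLogDeriv]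

theorem mul_left (h : HasLogDeriv D a b f) (c : A) : HasLogDeriv D (c * a) (c * b) f := by
  unfold HasLogDeriv at *
  rw [mul_assoc, h, mul_assoc]

theorem mul (h : HasLogDeriv D a b f) (h' : HasLogDeriv D a c f') :
    HasLogDeriv D a (b + c) (f * f') := by
  unfold HasLogDeriv at *
  rw [D.leibniz, smul_eq_mul, smul_eq_mul]
  linear_combination f * h' + f' * h

theorem pow (h : HasLogDeriv D a b f) (n : ℕ) : HasLogDeriv D a (n * b) (f ^ n) := by
  induction n with
  | zero => simpa using one a
  | succ n ih => simpa [pow_succ, add_mul] using ih.mul h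

theorem prod {ι : Type*} {s : Finset ι} {b f : ι → A}
    (h : ∀ i ∈ s, HasLogDeriv D a (b i) (f i)) :
    HasLogDeriv D a (∑ i ∈ s, b i) (∏ i ∈ s, f i) := by
  classical
  induction s using Finset.induction_on with
  | empty => simpa using one a
  | insert i s hi ih =>
    rw [Finset.sum_insert hi, Finset.prod_insert hi]
    exact (h i (s.mem_insert_self i)).mul (ih fun j hj => h j (Finset.mem_insert_of_mem hj))

theorem unique [IsDomain A] {b' : A} (h : HasLogDeriv D a b f) (h' : HasLogDeriv D a b' f)
    (hf : f ≠ 0) : b = b' :=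
  mul_right_cancel₀ hf (h.symm.trans h')

variable {S B : Type*} [CommRing S] [CommRing B] [Algebra S B] {D' : Derivation S B B}

theorem map (ρ : A →+* B) {J : B} (hρ : ∀ x, D' (ρ x) = ρ (D x) * J)
    (h : HasLogDeriv D a b f) : HasLogDeriv D' (ρ a) (ρ b * J) (ρ f) := by
  unfold HasLogDeriv at *
  rw [hρ, ← mul_assoc, ← map_mul, h, map_mul, mul_right_comm]

/-- Pullback of the form `n · da/a + F · g/a` along a substitution `ρ` with Jacobian `J` under
which `g` transforms into `μ · g'`. -/
theorem map_natCast_mul_add (ρ : A →+* B) {J : B} (hρ : ∀ x, D' (ρ x) = ρ (D x) * J)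
    {g F : A} {g' μ : B} (hg : ρ g * J = μ * g') {n : ℕ}
    (h : HasLogDeriv D a (n * D a + g * F) f) :
    HasLogDeriv D' (ρ a) (n * D' (ρ a) + μ * g' * ρ F) (ρ f) := by
  have key := h.map ρ hρ
  rwa [map_add, map_mul, map_mul, map_natCast, add_mul, mul_assoc, ← hρ, mul_right_comm, hg]
    at key

end HasLogDeriv

namespace PowerSeries

variable {R : Type*} [CommRing R]

set_option linter.deprecated false in
theorem derivativeFun_eq_derivative (f : R⟦X⟧) : derivativeFun f = d⁄dX R f := rfl

theorem derivative_map {S : Type*} [CommRing S] (ρ : R →+* S) (f : R⟦X⟧) :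
    d⁄dX S (map ρ f) = map ρ (d⁄dX R f) := by
  ext n
  simp [coeff_derivative, coeff_map]

theorem hasLogDeriv_X : HasLogDeriv (d⁄dX R) X 1 X := by
  simp [HasLogDeriv]

theorem map_C_of_coeff_eq_sum {φ : R⟦X⟧ →+* R⟦X⟧} {Xπ : R⟦X⟧}
    (hφ : ∀ f k, coeff k (φ f) = ∑ n ∈ Finset.range (k + 1), coeff n f * coeff k (Xπ ^ n))
    (c : R) : φ (C c) = C c := by
  ext k
  rw [hφ, Finset.sum_eq_single 0 (fun i _ hi => by simp [coeff_C, hi]) (by simp)]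
  simp [coeff_C, coeff_one]

theorem map_X_of_coeff_eq_sum {φ : R⟦X⟧ →+* R⟦X⟧} {Xπ : R⟦X⟧}
    (hφ : ∀ f k, coeff k (φ f) = ∑ n ∈ Finset.range (k + 1), coeff n f * coeff k (Xπ ^ n))
    (hXπ0 : constantCoeff Xπ = 0) : φ X = Xπ := by
  ext k
  rw [hφ, Finset.sum_eq_single 1 (fun i _ hi => by simp [coeff_X, hi])]
  · simp
  · intro hk
    simp_all

theorem hasLogDeriv_X_pow_mul_pow_mul {P V E : R⟦X⟧} {d : ℤ}
    (hP : HasLogDeriv (d⁄dX R) X (V - C (d : R)) P) {k n : ℕ} (hk : (k : ℤ) = n + d) :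
    HasLogDeriv (d⁄dX R) (X * E) (n * d⁄dX R (X * E) + E * V) (X ^ k * E ^ n * P) := by
  have hXk := (hasLogDeriv_X.pow k).mul_left E
  have hEn := ((HasLogDeriv.self (D := d⁄dX R) E).pow n).mul_left X
  have hP' := hP.mul_left E
  rw [mul_comm E X] at hXk hP'
  convert (hXk.mul hEn).mul hP' using 1
  have hkR : (k : R⟦X⟧) = n + C (d : R) := by
    rw [map_intCast]
    exact_mod_cast congrArg (Int.cast : ℤ → R⟦X⟧) hk
  rw [Derivation.leibniz, smul_eq_mul, smul_eq_mul, derivative_X, hkR]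
  ring


end PowerSeries

namespace LaurentSeries

open PowerSeries
open HahnSeries (single ofPowerSeries single_mul_single)

variable {R : Type*} [CommRing R]

theorem isUnit_powerSeriesPart [IsDomain R] {u : R⸨X⸩} (hu : IsUnit u) :
    IsUnit u.powerSeriesPart := by
  rw [PowerSeries.isUnit_iff_constantCoeff, ← coeff_zero_eq_constantCoeff_apply,
    powerSeriesPart_coeff, Nat.cast_zero, add_zero, ← HahnSeries.leadingCoeff_eq]
  exact HahnSeries.isUnit_iff.mp hu

/-- For a unit `u = Z^d · P` of `R⸨X⸩`, the power series `Z · u'/u = d + Z · P'/P`. -/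
noncomputable def zLogDeriv (u : R⸨X⸩) : R⟦X⟧ :=
  (C (u.order : R) * u.powerSeriesPart + X * d⁄dX R u.powerSeriesPart) *
    Ring.inverse u.powerSeriesPart

theorem hasLogDeriv_powerSeriesPart {u : R⸨X⸩} (hP : IsUnit u.powerSeriesPart) :
    HasLogDeriv (d⁄dX R) X (zLogDeriv u - C (u.order : R)) u.powerSeriesPart := by
  rw [HasLogDeriv, zLogDeriv, sub_mul, mul_assoc, Ring.inverse_mul_cancel _ hP]
  ring

theorem single_mul_eq_ofPowerSeries (u : R⸨X⸩) {j : ℤ} {m : ℕ} (hm : (m : ℤ) = j + u.order) :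
    single j 1 * u = ofPowerSeries ℤ R (X ^ m * u.powerSeriesPart) := by
  nth_rewrite 1 [← u.single_order_mul_powerSeriesPart]
  rw [← mul_assoc, single_mul_single, one_mul, ← hm, map_mul, HahnSeries.ofPowerSeries_X_pow]

theorem ofPowerSeries_X_mul_pow_mul (u : R⸨X⸩) (E : R⟦X⟧) {k n : ℕ}
    (hk : (k : ℤ) = n + u.order) :
    ofPowerSeries ℤ R (X * E) ^ n * u = ofPowerSeries ℤ R (X ^ k * E ^ n * u.powerSeriesPart) := by
  rw [← map_pow, mul_pow, map_mul, HahnSeries.ofPowerSeries_X_pow, mul_right_comm,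
    single_mul_eq_ofPowerSeries u hk, ← map_mul, mul_right_comm]

theorem eq_X_pow_mul_of_eq_single_mul {u : R⸨X⸩} {N : R⟦X⟧} {j : ℤ} {m : ℕ}
    (hu : u = single (-j) 1 * ofPowerSeries ℤ R N) (hm : (m : ℤ) = j + u.order) :
    N = X ^ m * u.powerSeriesPart := by
  apply HahnSeries.ofPowerSeries_injective (Γ := ℤ)
  rw [← single_mul_eq_ofPowerSeries u hm, hu, ← mul_assoc, single_mul_single, add_neg_cancel,
    mul_one, HahnSeries.single_zero_one, one_mul]

theorem inverse_eq_single_mul [IsDomain R] {u : R⸨X⸩} (hu : IsUnit u) :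
    Ring.inverse u =
      single (-u.order) 1 * ofPowerSeries ℤ R (Ring.inverse u.powerSeriesPart) := by
  have hP := isUnit_powerSeriesPart hu
  have hu_eq := u.single_order_mul_powerSeriesPart
  set P := u.powerSeriesPart
  set d := u.order
  rw [← mul_one (Ring.inverse u), Ring.inverse_mul_eq_iff_eq_mul _ _ _ hu, ← hu_eq,
    mul_mul_mul_comm, single_mul_single, add_neg_cancel, one_mul, HahnSeries.single_zero_one,
    one_mul, ← map_mul, Ring.mul_inverse_cancel _ hP, map_one]

theorem lderiv_eq_single_mul (u : R⸨X⸩) : lderiv u = single (u.order - 1) 1 *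
    ofPowerSeries ℤ R (C (u.order : R) * u.powerSeriesPart + X * d⁄dX R u.powerSeriesPart) := by
  rw [lderiv, derivativeFun_eq_derivative, map_add, mul_add, map_mul, map_mul,
    HahnSeries.ofPowerSeries_C, HahnSeries.ofPowerSeries_X, ← mul_assoc, ← mul_assoc,
    single_mul_single, HahnSeries.C_apply, single_mul_single, add_zero, one_mul, sub_add_cancel,
    mul_one]

theorem lderiv_mul_inverse [IsDomain R] {u : R⸨X⸩} (hu : IsUnit u) :
    lderiv u * Ring.inverse u = single (-1) 1 * ofPowerSeries ℤ R (zLogDeriv u) := by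
  rw [inverse_eq_single_mul hu, lderiv_eq_single_mul, mul_mul_mul_comm, single_mul_single,
    ← map_mul, zLogDeriv]
  ring_nf

theorem deltaLTLaurent_eq [IsDomain R] (g : R⟦X⟧ˣ) {u : R⸨X⸩} (hu : IsUnit u) :
    DeltaLTLaurent g u = single (-1) 1 * ofPowerSeries ℤ R (↑g⁻¹ * zLogDeriv u) := by
  rw [DeltaLTLaurent, mul_assoc, lderiv_mul_inverse hu, mul_left_comm, map_mul]

end LaurentSeries

theorem psiCol_eq_of_norm_eq {O Obar : Type*} [CommRing O] [CommRing Obar] [IsDomain Obar]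
    [Algebra O Obar] (hObar : Function.Injective (algebraMap O Obar)) {π : O} {q : ℕ}
    {Xπ : O⟦X⟧} {φ : O⟦X⟧ →+* O⟦X⟧} (hφinj : Function.Injective φ) (hφX : φ X = Xπ)
    (hφC : ∀ c, φ (C c) = C c) {LT1 : Finset Obar} (hLT1 : LT1.card = q)
    {σ : Obar → (O⟦X⟧ →+* Obar⟦X⟧)}
    (hσφ : ∀ a ∈ LT1, ∀ f, σ a (φ f) = map (algebraMap O Obar) (φ f))
    {ψCol : O⟦X⟧ →ₗ[O] O⟦X⟧}
    (hψ : ∀ f, map (algebraMap O Obar) (φ (ψCol f)) = ∑ a ∈ LT1, σ a f)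
    {g : O⟦X⟧ˣ} (hgφ : C π * (g : O⟦X⟧) = d⁄dX O Xπ * φ g)
    (hchainφ : ∀ f, d⁄dX O (φ f) = φ (d⁄dX O f) * d⁄dX O Xπ)
    (hchainσ : ∀ a ∈ LT1, ∀ f, d⁄dX Obar (σ a f) = σ a (d⁄dX O f) * d⁄dX Obar (σ a X))
    (hinvσ : ∀ a ∈ LT1, σ a g * d⁄dX Obar (σ a X) = map (algebraMap O Obar) g)
    {h f F W : O⟦X⟧} {n : ℕ}
    (hh : HasLogDeriv (d⁄dX O) Xπ (n * d⁄dX O Xπ + g * F) h)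
    (hf : HasLogDeriv (d⁄dX O) X ((q * n : ℕ) * d⁄dX O X + g * W) f) (hf0 : f ≠ 0)
    (hnorm : map (algebraMap O Obar) (φ f) = ∏ a ∈ LT1, σ a h) :
    ψCol F = C π * W := by
  classical
  set mapA := map (algebraMap O Obar)
  have hchainA : ∀ x, d⁄dX Obar (mapA x) = mapA (d⁄dX O x) * 1 := fun x => by
    rw [mul_one, derivative_map]
  have hσ : HasLogDeriv (d⁄dX Obar) (mapA Xπ)
      ((q * n : ℕ) * d⁄dX Obar (mapA Xπ) + mapA g * ∑ a ∈ LT1, σ a F) (mapA (φ f)) := by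
    have hconj : ∀ a ∈ LT1, HasLogDeriv (d⁄dX Obar) (mapA Xπ)
        (n * d⁄dX Obar (mapA Xπ) + 1 * mapA g * σ a F) (σ a h) := fun a ha => by
      have hσh := hh.map_natCast_mul_add (σ a) (hchainσ a ha) (by rw [one_mul, hinvσ a ha])
      rwa [← hφX, hσφ a ha, hφX] at hσh
    rw [hnorm]
    convert HasLogDeriv.prod hconj using 1
    · rw [Finset.sum_add_distrib, Finset.sum_const, hLT1, ← Finset.mul_sum, nsmul_eq_mul]
      push_cast
      ring
  have hφ : HasLogDeriv (d⁄dX Obar) (mapA Xπ)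
      ((q * n : ℕ) * d⁄dX Obar (mapA Xπ) + 1 * mapA g * mapA (φ (C π * W))) (mapA (φ f)) := by
    have hφf := hf.map_natCast_mul_add φ hchainφ (μ := C π) (g' := g) (by rw [hgφ, mul_comm])
    rw [hφX, ← hφC, mul_comm (φ _), mul_assoc, ← map_mul] at hφf
    exact hφf.map_natCast_mul_add mapA hchainA (by rw [mul_one, one_mul])
  have hS0 : mapA (φ f) ≠ 0 :=
    (map_ne_zero_iff _ (map_injective _ hObar)).mpr ((map_ne_zero_iff _ hφinj).mpr hf0)
  have hgA : mapA g * mapA (φ (ψCol F)) = mapA g * mapA (φ (C π * W)) := by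
    rw [hψ]
    simpa using hσ.unique hφ hS0
  exact hφinj (map_injective _ hObar (mul_left_cancel₀ ((g.isUnit.map mapA).ne_zero) hgA))

theorem psiL_eq_of_psiCol_eq {O : Type*} [CommRing O] {π : O} {Xπ E W : O⟦X⟧}
    (hE : Xπ = X * E) {ψCol : O⟦X⟧ →ₗ[O] O⟦X⟧} {ψL : LaurentSeries O →ₗ[O] LaurentSeries O}
    (hψL : ∀ (f : LaurentSeries O) (n : ℕ) (h : O⟦X⟧),
      HahnSeries.ofPowerSeries ℤ O Xπ ^ n * f = HahnSeries.ofPowerSeries ℤ O h →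
      ψL f = HahnSeries.single (-(n : ℤ)) 1 * HahnSeries.ofPowerSeries ℤ O (ψCol h))
    {Δ : LaurentSeries O} (hΔ : Δ = HahnSeries.single (-1) 1 * HahnSeries.ofPowerSeries ℤ O W)
    (hW : ψCol (E * W) = C π * W) :
    ψL Δ = HahnSeries.C π * Δ := by
  have hXΔ : HahnSeries.ofPowerSeries ℤ O Xπ ^ 1 * Δ = HahnSeries.ofPowerSeries ℤ O (E * W) := by
    rw [pow_one, hΔ, hE, map_mul (HahnSeries.ofPowerSeries ℤ O) X, HahnSeries.ofPowerSeries_X,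
      mul_mul_mul_comm, HahnSeries.single_mul_single, add_neg_cancel, mul_one,
      HahnSeries.single_zero_one, one_mul, ← map_mul]
  rw [hψL _ 1 _ hXΔ, hW, hΔ, map_mul, HahnSeries.ofPowerSeries_C, Nat.cast_one, mul_left_comm]

theorem statement15_psi_invariance_of_dlog_general
    (O : Type*) [CommRing O] [IsDomain O]
    (π : O)
    (q : ℕ) (hq1 : 1 < q)
    (Xπ : PowerSeries O)
    (hXπ0 : constantCoeff Xπ = 0)
    (φ : PowerSeries O →+* PowerSeries O)
    (hφ : ∀ f k, coeff k (φ f) = ∑ n ∈ Finset.range (k + 1), coeff n f * coeff k (Xπ ^ n))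
    (hφinj : Function.Injective φ)
    (Obar : Type*) [CommRing Obar] [IsDomain Obar] [Algebra O Obar]
    (hObar : Function.Injective (algebraMap O Obar))
    (LT1 : Finset Obar) (hLT1 : LT1.card = q)
    (σ : Obar → (PowerSeries O →+* PowerSeries Obar))
    (hσφ : ∀ a ∈ LT1, ∀ f, σ a (φ f) = PowerSeries.map (algebraMap O Obar) (φ f))
    (ψCol : PowerSeries O →ₗ[O] PowerSeries O)
    (hψ : ∀ f, PowerSeries.map (algebraMap O Obar) (φ (ψCol f)) = ∑ a ∈ LT1, σ a f)
    (𝒩 : PowerSeries O →* PowerSeries O)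
    (h𝒩 : ∀ f, PowerSeries.map (algebraMap O Obar) (φ (𝒩 f)) = ∏ a ∈ LT1, σ a f)
    (g : (PowerSeries O)ˣ)
    (hgφ : C π * (↑g : PowerSeries O) = PowerSeries.derivativeFun Xπ * φ ↑g)
    (hchainφ : ∀ f, PowerSeries.derivativeFun (φ f) =
      φ (PowerSeries.derivativeFun f) * PowerSeries.derivativeFun Xπ)
    (hchainσ : ∀ a ∈ LT1, ∀ f, PowerSeries.derivativeFun (σ a f) =
      σ a (PowerSeries.derivativeFun f) * PowerSeries.derivativeFun (σ a X))
    (hinvσ : ∀ a ∈ LT1, σ a (↑g : PowerSeries O) * PowerSeries.derivativeFun (σ a X) =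
      PowerSeries.map (algebraMap O Obar) ↑g)
    -- the extension of `ψ_Col` to `o_L((Z))`
    (ψL : LaurentSeries O →ₗ[O] LaurentSeries O)
    (hψL : ∀ (f : LaurentSeries O) (n : ℕ) (h : PowerSeries O),
      (HahnSeries.ofPowerSeries ℤ O Xπ) ^ n * f = HahnSeries.ofPowerSeries ℤ O h →
      ψL f = HahnSeries.single (-(n : ℤ)) 1 * HahnSeries.ofPowerSeries ℤ O (ψCol h))
    -- the (multiplicative) extension of `𝒩` to `o_L((Z))`
    (NL : LaurentSeries O → LaurentSeries O)
    (hNL : ∀ (f : LaurentSeries O) (n : ℕ) (h : PowerSeries O),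
      (HahnSeries.ofPowerSeries ℤ O Xπ) ^ n * f = HahnSeries.ofPowerSeries ℤ O h →
      NL f = HahnSeries.single (-(q * n : ℕ) : ℤ) 1 * HahnSeries.ofPowerSeries ℤ O (𝒩 h)) :
    ∀ u : LaurentSeries O, IsUnit u → NL u = u →
      ψL (DeltaLTLaurent g u) = HahnSeries.C π * DeltaLTLaurent g u := by
  intro u hu hNu
  simp only [derivativeFun_eq_derivative] at hgφ hchainφ hchainσ hinvσ
  have hP := LaurentSeries.isUnit_powerSeriesPart hu
  set W := (↑g⁻¹ : O⟦X⟧) * LaurentSeries.zLogDeriv u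
  have hgW : LaurentSeries.zLogDeriv u = g * W := by rw [← mul_assoc, g.mul_inv, one_mul]
  have hΔ := LaurentSeries.deltaLTLaurent_eq g hu
  obtain ⟨E, hE⟩ : X ∣ Xπ := X_dvd_iff.mpr hXπ0
  refine psiL_eq_of_psiCol_eq hE hψL hΔ ?_
  set n := u.order.natAbs
  obtain ⟨k, hk⟩ : ∃ k : ℕ, (k : ℤ) = n + u.order := ⟨_, Int.toNat_of_nonneg (by omega)⟩
  have hnq : n ≤ q * n := Nat.le_mul_of_pos_left n (by omega)
  obtain ⟨m, hm⟩ : ∃ m : ℕ, (m : ℤ) = (q * n : ℕ) + u.order :=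
    ⟨_, Int.toNat_of_nonneg (by omega)⟩
  have hNh : 𝒩 (X ^ k * E ^ n * u.powerSeriesPart) = X ^ m * u.powerSeriesPart :=
    LaurentSeries.eq_X_pow_mul_of_eq_single_mul
      (hNu.symm.trans (hNL u n _ (hE ▸ LaurentSeries.ofPowerSeries_X_mul_pow_mul u E hk))) hm
  have hPlog := LaurentSeries.hasLogDeriv_powerSeriesPart hP
  have hh := hasLogDeriv_X_pow_mul_pow_mul (E := E) hPlog hk
  rw [hgW, mul_left_comm, ← hE] at hh
  have hf := hasLogDeriv_X_pow_mul_pow_mul (E := 1) hPlog hm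
  simp only [mul_one, one_pow, one_mul, hgW] at hf
  exact psiCol_eq_of_norm_eq hObar hφinj (map_X_of_coeff_eq_sum hφ hXπ0)
    (map_C_of_coeff_eq_sum hφ) hLT1 hσφ hψ hgφ hchainφ hchainσ hinvσ hh hf
    (mul_ne_zero (pow_ne_zero _ X_ne_zero) hP.ne_zero) (by rw [← hNh, h𝒩])

/-- Context as in Statements 0 and 1 (Lubin-Tate series `Xπ = [π_L](Z)` over `O = o_L`, Frobenius
substitution `φ`, torsion points `LT1 ⊆ Obar`, substitutions `σ a : f(Z) ↦ f(a +_LT Z)`, the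
trace operator `ψCol` and norm operator `𝒩` on `o_L[[Z]]`, and the invariant-differential unit
`g = g_LT`).  `ψL` and `NL` denote the extensions of `ψ_Col` and `𝒩` to the Laurent series ring
`o_L((Z)) = o_L[[Z]][Z⁻¹]`, determined by `ψ_Col(f) = Z^{-n}·ψ_Col([π_L](Z)^n·f)` and
`𝒩(f) = Z^{-qn}·𝒩([π_L](Z)^n·f)` whenever `[π_L](Z)^n·f ∈ o_L[[Z]]`.

Conclusion: if `û ∈ o_L((Z))ˣ` satisfies `𝒩(û) = û`, then `ψ_Col(Δ_LT(û)) = π_L·Δ_LT(û)`;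
equivalently, the differential form `dû/û = Δ_LT(û)·g_LT dZ` is invariant under the operator
`ψ_{Ω¹}(f·g_LT dZ) = π_L⁻¹·ψ_Col(f)·g_LT dZ`. -/
theorem statement15_psi_invariance_of_dlog
    (O : Type*) [CommRing O] [IsDomain O] [IsDiscreteValuationRing O]
    (π : O) (hπ : Irreducible π) [IsAdicComplete (Ideal.span {π}) O]
    (q : ℕ) (hq1 : 1 < q) (hq : Nat.card (O ⧸ Ideal.span {π}) = q)
    (Xπ : PowerSeries O)
    (hXπ0 : constantCoeff Xπ = 0)
    (hXπ1 : coeff 1 Xπ = π)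
    (hXπq : ∃ gq : PowerSeries O, Xπ = X ^ q + C π * gq)
    (φ : PowerSeries O →+* PowerSeries O)
    (hφ : ∀ f k, coeff k (φ f) = ∑ n ∈ Finset.range (k + 1), coeff n f * coeff k (Xπ ^ n))
    (hφinj : Function.Injective φ)
    (Obar : Type*) [CommRing Obar] [IsDomain Obar] [Algebra O Obar]
    (hObar : Function.Injective (algebraMap O Obar))
    (LT1 : Finset Obar) (hLT1 : LT1.card = q)
    (σ : Obar → (PowerSeries O →+* PowerSeries Obar))
    (hσC : ∀ a ∈ LT1, ∀ r : O, σ a (C r) = C (algebraMap O Obar r))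
    (hσ0 : ∀ a ∈ LT1, constantCoeff (σ a X) = a)
    (hσφ : ∀ a ∈ LT1, ∀ f, σ a (φ f) = PowerSeries.map (algebraMap O Obar) (φ f))
    (ψCol : PowerSeries O →ₗ[O] PowerSeries O)
    (hψ : ∀ f, PowerSeries.map (algebraMap O Obar) (φ (ψCol f)) = ∑ a ∈ LT1, σ a f)
    (𝒩 : PowerSeries O →* PowerSeries O)
    (h𝒩 : ∀ f, PowerSeries.map (algebraMap O Obar) (φ (𝒩 f)) = ∏ a ∈ LT1, σ a f)
    (g : (PowerSeries O)ˣ)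
    (hg1 : constantCoeff (↑g : PowerSeries O) = 1)
    (hgφ : C π * (↑g : PowerSeries O) = PowerSeries.derivativeFun Xπ * φ ↑g)
    (hchainφ : ∀ f, PowerSeries.derivativeFun (φ f) =
      φ (PowerSeries.derivativeFun f) * PowerSeries.derivativeFun Xπ)
    (hchainσ : ∀ a ∈ LT1, ∀ f, PowerSeries.derivativeFun (σ a f) =
      σ a (PowerSeries.derivativeFun f) * PowerSeries.derivativeFun (σ a X))
    (hinvσ : ∀ a ∈ LT1, σ a (↑g : PowerSeries O) * PowerSeries.derivativeFun (σ a X) =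
      PowerSeries.map (algebraMap O Obar) ↑g)
    -- the extension of `ψ_Col` to `o_L((Z))`
    (ψL : LaurentSeries O →ₗ[O] LaurentSeries O)
    (hψL : ∀ (f : LaurentSeries O) (n : ℕ) (h : PowerSeries O),
      (HahnSeries.ofPowerSeries ℤ O Xπ) ^ n * f = HahnSeries.ofPowerSeries ℤ O h →
      ψL f = HahnSeries.single (-(n : ℤ)) 1 * HahnSeries.ofPowerSeries ℤ O (ψCol h))
    -- the (multiplicative) extension of `𝒩` to `o_L((Z))`
    (NL : LaurentSeries O → LaurentSeries O)
    (hNLmul : ∀ f₁ f₂, NL (f₁ * f₂) = NL f₁ * NL f₂)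
    (hNL : ∀ (f : LaurentSeries O) (n : ℕ) (h : PowerSeries O),
      (HahnSeries.ofPowerSeries ℤ O Xπ) ^ n * f = HahnSeries.ofPowerSeries ℤ O h →
      NL f = HahnSeries.single (-(q * n : ℕ) : ℤ) 1 * HahnSeries.ofPowerSeries ℤ O (𝒩 h)) :
    ∀ u : LaurentSeries O, IsUnit u → NL u = u →
      ψL (DeltaLTLaurent g u) = HahnSeries.C π * DeltaLTLaurent g u :=
  statement15_psi_invariance_of_dlog_general O π q hq1 Xπ hXπ0 φ hφ hφinj Obar hObar LT1 hLT1 σ hσφ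
    ψCol hψ 𝒩 h𝒩 g hgφ hchainφ hchainσ hinvσ ψL hψL NL hNL
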